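/- arXiv:2509.16008 — 5 statements merged into one kernel-verified Lean document; each statement's English description precedes it below -/
import Mathlib

section
/- Let d ≥ 1 be an integer, let s, Δ > 0 and suppose N := s·√d/Δ is a positive integer. Then for every point p ∈ ℝ^d there exists z ∈ {0,1,…,N−1}^d such that p is Δ-near in the shifted grid G_s((Δ/√d)·z); concretely, the point q with coordinates q_i = (Δ/√d)·z_i + s·(⌊(p_i − (Δ/√d)·z_i)/s⌋ + 1/2) satisfies the Euclidean bound ‖p − q‖ ≤ Δ. -/
/-!
Shifting the one-dimensional grid of side `s` by `k · (s/N)` moves its cell centers in steps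
of `s/N`, so for a suitable `k < N` some center lies within `s/N` of a given coordinate `x`:
take `k = ⌊N · fract (x/s - 1/2)⌋`. Choosing such a shift in every coordinate puts `p` within
Euclidean distance `√d · s/N = Δ` of the center of its cell.
-/

open Int in
theorem sub_cell_center_eq_mul_fract {s : ℝ} (hs : s ≠ 0) (c x : ℝ) :
    x - (c + s * ((⌊(x - c) / s⌋ : ℝ) + 1 / 2)) = s * (fract ((x - c) / s) - 1 / 2) := by
  rw [fract]
  field_simp
  ring

theorem abs_fract_add_half_sub_half_le {e : ℝ} (he : 0 ≤ e) :
    |Int.fract (e + 1 / 2) - 1 / 2| ≤ e := by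
  rcases lt_or_ge e (1 / 2) with h | h
  · rw [Int.fract_eq_self.mpr ⟨by linarith, by linarith⟩, add_sub_cancel_right, abs_of_nonneg he]
  · have := Int.fract_nonneg (e + 1 / 2)
    have := Int.fract_lt_one (e + 1 / 2)
    exact abs_le.mpr ⟨by linarith, by linarith⟩

theorem exists_shift_abs_sub_cell_center_le {s : ℝ} (hs : 0 < s) {N : ℕ} (hN : 0 < N) (x : ℝ) :
    ∃ k < N, |x - (s / N * k + s * ((⌊(x - s / N * k) / s⌋ : ℝ) + 1 / 2))| ≤ s / N := by
  have hN' : (0 : ℝ) < N := by exact_mod_cast hN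
  set u := Int.fract (x / s - 1 / 2) with hu_def
  have hu_lt := Int.fract_lt_one (x / s - 1 / 2)
  have hNu : 0 ≤ N * u := by positivity
  set k := ⌊N * u⌋₊
  refine ⟨k, Nat.floor_lt hNu |>.mpr (by nlinarith), ?_⟩
  set e := u - k / N with he_def
  have he_nonneg : 0 ≤ e := by
    rw [sub_nonneg, div_le_iff₀' hN']
    exact Nat.floor_le hNu
  have he_le : e ≤ 1 / N := by
    rw [sub_le_iff_le_add, ← add_div, le_div_iff₀' hN', add_comm]
    exact (Nat.lt_floor_add_one _).le
  have hshift : (x - s / N * k) / s = (⌊x / s - 1 / 2⌋ : ℝ) + (e + 1 / 2) := by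
    have hsub : (x - s / N * k) / s = (x / s - 1 / 2) + 1 / 2 - k / N := by field_simp; ring
    linarith [Int.floor_add_fract (x / s - 1 / 2)]
  rw [sub_cell_center_eq_mul_fract hs.ne', hshift, Int.fract_intCast_add, abs_mul, abs_of_pos hs]
  calc s * |Int.fract (e + 1 / 2) - 1 / 2| ≤ s * e := by
        gcongr; exact abs_fract_add_half_sub_half_le he_nonneg
    _ ≤ s * (1 / N) := by gcongr
    _ = s / N := by ring

theorem EuclideanSpace.norm_le_sqrt_card_mul {ι : Type*} [Fintype ι] {r : ℝ}
    (v : EuclideanSpace ℝ ι) (hv : ∀ i, |v i| ≤ r) : ‖v‖ ≤ √(Fintype.card ι) * r := by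
  cases isEmpty_or_nonempty ι
  · simp [Subsingleton.elim v 0]
  have hr : 0 ≤ r := (abs_nonneg _).trans (hv (Classical.arbitrary ι))
  calc ‖v‖ = √(∑ i, v i ^ 2) := by simp [EuclideanSpace.norm_eq]
    _ ≤ √(∑ _ : ι, r ^ 2) :=
      Real.sqrt_le_sqrt <| Finset.sum_le_sum fun i _ => sq_le_sq.mpr ((hv i).trans (le_abs_self r))
    _ = √(Fintype.card ι) * r := by simp [Real.sqrt_mul, hr]

theorem grid_shift_general (d : ℕ) (s Δ : ℝ) (hs : 0 < s)
    (N : ℕ) (hN : 0 < N) (hNval : (N : ℝ) = s * Real.sqrt d / Δ)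
    (p : EuclideanSpace ℝ (Fin d)) :
    ∃ z : Fin d → ℕ, (∀ i, z i < N) ∧
      ‖p - (WithLp.equiv 2 (Fin d → ℝ)).symm (fun i =>
          (Δ / Real.sqrt d) * (z i : ℝ) +
          s * ((⌊(p i - (Δ / Real.sqrt d) * (z i : ℝ)) / s⌋ : ℝ) + 1/2))‖ ≤ Δ := by
  have hne : √d ≠ 0 ∧ Δ ≠ 0 := by
    have := hNval ▸ (Nat.cast_ne_zero.mpr hN.ne' : (N : ℝ) ≠ 0)
    simp only [div_ne_zero_iff, mul_ne_zero_iff] at this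
    exact ⟨this.1.2, this.2⟩
  have hstep : Δ / √d = s / N := by
    rw [hNval]
    field_simp [hne.1, hne.2]
  choose z hzN hz using fun i => exists_shift_abs_sub_cell_center_le hs hN (p i)
  refine ⟨z, hzN, ?_⟩
  calc _ ≤ √(Fintype.card (Fin d)) * (s / N) := by
        rw [hstep]
        exact EuclideanSpace.norm_le_sqrt_card_mul _ hz
    _ = Δ := by
        rw [Fintype.card_fin, ← hstep]
        field_simp [hne.1]

/-- grid shifting lemma. For `N = s·√d/Δ` a positive integer, every point
`p ∈ ℝ^d` is `Δ`-near in one of the shifted grids `G_s((Δ/√d)·z)`, `z ∈ {0,…,N−1}^d`: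
the center `q` of the cell of that grid containing `p` satisfies `‖p − q‖ ≤ Δ`. -/
theorem grid_shift (d : ℕ) (hd : 1 ≤ d) (s Δ : ℝ) (hs : 0 < s) (hΔ : 0 < Δ)
    (N : ℕ) (hN : 0 < N) (hNval : (N : ℝ) = s * Real.sqrt d / Δ)
    (p : EuclideanSpace ℝ (Fin d)) :
    ∃ z : Fin d → ℕ, (∀ i, z i < N) ∧
      ‖p - (WithLp.equiv 2 (Fin d → ℝ)).symm (fun i =>
          (Δ / Real.sqrt d) * (z i : ℝ) +
          s * ((⌊(p i - (Δ / Real.sqrt d) * (z i : ℝ)) / s⌋ : ℝ) + 1/2))‖ ≤ Δ :=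
  grid_shift_general d s Δ hs N hN hNval p
end

section
/- Let μ be a probability measure on a measurable space Ω, let 0 < ε ≤ 1/4, let B_1,…,B_k (k ≥ 1) be measurable subsets of Ω with μ(B_j) ≥ 1/2 − ε for every j, and let w_1,…,w_k ≥ 0 with W = Σ_{j=1}^k w_j. Let t ≥ 1 and consider t independent samples p_1,…,p_t drawn from μ, i.e., the product measure μ^{⊗t} on Ω^t. Then the μ^{⊗t}-probability of the event that there exists an index i ∈ {1,…,t} with wd(p_i) ≥ (1/2 − 2ε)·W is at least 1 − k·exp(−t·ε²/8). -/
/-!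
The set `G` of points of depth at least `(1/2 - 2ε) W` has probability at least `ε`: the depth
is at most `W` everywhere and below `(1/2 - 2ε) W` off `G`, while its mean is
`∑ j, μ(B j) w j ≥ (1/2 - ε) W`, which forces `(1/2 + 2ε) W μ(G) ≥ ε W`. Hence all `t`
independent samples miss `G` with probability `(1 - μ(G))^t ≤ exp (-t ε) ≤ exp (-t ε² / 8)`.
-/

open MeasureTheory Real

section Probability

variable {Ω : Type*} [MeasurableSpace Ω] {μ : Measure Ω} [IsProbabilityMeasure μ]

theorem integral_sub_le_mul_measureReal_le {f : Ω → ℝ} (hfm : Measurable f)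
    (hfi : Integrable f μ) {M : ℝ} (hfM : ∀ x, f x ≤ M) (a : ℝ) :
    ∫ x, f x ∂μ - a ≤ (M - a) * μ.real {x | a ≤ f x} := by
  set G := {x | a ≤ f x}
  have hG : MeasurableSet G := measurableSet_le measurable_const hfm
  have hbound : ∀ x, f x ≤ a + G.indicator (fun _ => M - a) x := by
    intro x
    by_cases hx : x ∈ G
    · simp [Set.indicator_of_mem hx, hfM x]
    · simpa [Set.indicator_of_notMem hx] using (not_le.1 hx).le
  have hmono : ∫ x, f x ∂μ ≤ ∫ x, (a + G.indicator (fun _ => M - a) x) ∂μ :=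
    integral_mono hfi ((integrable_const a).add ((integrable_const _).indicator hG)) hbound
  rw [integral_add (integrable_const a) ((integrable_const _).indicator hG), integral_const,
    integral_indicator_const _ hG] at hmono
  simp only [probReal_univ, smul_eq_mul, one_mul] at hmono
  linarith

theorem le_measureReal_le_of_le_integral {f : Ω → ℝ} (hfm : Measurable f)
    (hfi : Integrable f μ) {W ε : ℝ} (hf0 : ∀ x, 0 ≤ f x) (hfW : ∀ x, f x ≤ W)
    (hε : ε ≤ 1/4) (hint : (1/2 - ε) * W ≤ ∫ x, f x ∂μ) :
    ε ≤ μ.real {x | (1/2 - 2*ε) * W ≤ f x} := by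
  rcases le_or_gt W 0 with hW | hW
  · have hG : {x | (1/2 - 2*ε) * W ≤ f x} = Set.univ :=
      Set.eq_univ_of_forall fun x =>
        (mul_nonpos_of_nonneg_of_nonpos (by linarith) hW).trans (hf0 x)
    rw [hG, probReal_univ]
    linarith
  · have hmarkov := integral_sub_le_mul_measureReal_le hfm hfi hfW ((1/2 - 2*ε) * W)
    have hq : 0 ≤ μ.real {x | (1/2 - 2*ε) * W ≤ f x} := measureReal_nonneg
    have hεW : ε * W ≤ μ.real {x | (1/2 - 2*ε) * W ≤ f x} * W := by
      nlinarith [mul_nonneg (mul_nonneg (by linarith : (0 : ℝ) ≤ 1/2 - 2*ε) hW.le) hq]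
    exact le_of_mul_le_mul_right hεW hW

theorem measureReal_pi_exists_mem {ι : Type*} [Fintype ι] {G : Set Ω} (hG : MeasurableSet G) :
    (Measure.pi fun _ : ι => μ).real {p | ∃ i, p i ∈ G} =
      1 - (1 - μ.real G) ^ Fintype.card ι := by
  have hcompl : {p : ι → Ω | ∃ i, p i ∈ G}ᶜ = Set.univ.pi fun _ => Gᶜ := by
    ext p
    simp [Set.mem_pi]
  have hmeas : MeasurableSet {p : ι → Ω | ∃ i, p i ∈ G} := by
    rw [Set.ofPred_exists]
    exact MeasurableSet.iUnion fun i => measurable_pi_apply i hG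
  have h := probReal_compl_eq_one_sub (μ := Measure.pi fun _ : ι => μ) hmeas
  rw [hcompl, measureReal_def, Measure.pi_pi, ENNReal.toReal_prod, Finset.prod_const,
    Finset.card_univ, ← measureReal_def, probReal_compl_eq_one_sub hG] at h
  linarith

end Probability

section WeightedDepth

variable {Ω ι : Type*} [Fintype ι] {B : ι → Set Ω} {w : ι → ℝ}

noncomputable def weightedDepth (B : ι → Set Ω) (w : ι → ℝ) (x : Ω) : ℝ :=
  ∑ j, (B j).indicator (fun _ => w j) x

theorem weightedDepth_nonneg (hw : ∀ j, 0 ≤ w j) (x : Ω) : 0 ≤ weightedDepth B w x :=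
  Finset.sum_nonneg fun j _ => Set.indicator_nonneg (fun _ _ => hw j) x

theorem weightedDepth_le_sum (hw : ∀ j, 0 ≤ w j) (x : Ω) :
    weightedDepth B w x ≤ ∑ j, w j :=
  Finset.sum_le_sum fun j _ => Set.indicator_le_self' (fun _ _ => hw j) x

variable [MeasurableSpace Ω]

theorem measurable_weightedDepth (hB : ∀ j, MeasurableSet (B j)) :
    Measurable (weightedDepth B w) :=
  Finset.measurable_sum _ fun j _ => measurable_const.indicator (hB j)

theorem integrable_weightedDepth (μ : Measure Ω) [IsFiniteMeasure μ]
    (hB : ∀ j, MeasurableSet (B j)) : Integrable (weightedDepth B w) μ :=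
  integrable_finsetSum _ fun j _ => (integrable_const (w j)).indicator (hB j)

theorem integral_weightedDepth (μ : Measure Ω) [IsFiniteMeasure μ]
    (hB : ∀ j, MeasurableSet (B j)) :
    ∫ x, weightedDepth B w x ∂μ = ∑ j, μ.real (B j) * w j := by
  unfold weightedDepth
  rw [integral_finsetSum _ fun j _ => (integrable_const (w j)).indicator (hB j)]
  simp only [integral_indicator_const _ (hB _), smul_eq_mul]

end WeightedDepth

theorem one_sub_pow_le_exp_neg_mul {q : ℝ} (hq : q ≤ 1) (t : ℕ) :
    (1 - q) ^ t ≤ exp (-(t * q)) := by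
  calc (1 - q) ^ t ≤ exp (-q) ^ t := pow_le_pow_left₀ (by linarith) (one_sub_le_exp_neg q) t
    _ = exp (-(t * q)) := by rw [← exp_nat_mul]; ring_nf

theorem random_sample_deep_point_general {Ω : Type*} [MeasurableSpace Ω]
    (μ : Measure Ω) [IsProbabilityMeasure μ]
    (ε : ℝ) (hε : 0 < ε) (hε' : ε ≤ 1/4)
    (k : ℕ) (hk : 1 ≤ k) (B : Fin k → Set Ω) (hB : ∀ j, MeasurableSet (B j))
    (hμB : ∀ j, 1/2 - ε ≤ (μ (B j)).toReal)
    (w : Fin k → ℝ) (hw : ∀ j, 0 ≤ w j) (W : ℝ) (hW : W = ∑ j, w j)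
    (t : ℕ) :
    1 - (k : ℝ) * Real.exp (-(t : ℝ) * ε ^ 2 / 8) ≤
      ((Measure.pi fun _ : Fin t => μ)
        {p : Fin t → Ω | ∃ i : Fin t,
          (1/2 - 2*ε) * W ≤ ∑ j, (B j).indicator (fun _ => w j) (p i)}).toReal := by
  set G := {x | (1/2 - 2*ε) * W ≤ weightedDepth B w x}
  have hG : MeasurableSet G := measurableSet_le measurable_const (measurable_weightedDepth hB)
  have hmean : (1/2 - ε) * W ≤ ∫ x, weightedDepth B w x ∂μ := by
    rw [integral_weightedDepth μ hB, hW, Finset.mul_sum]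
    exact Finset.sum_le_sum fun j _ => mul_le_mul_of_nonneg_right (hμB j) (hw j)
  have hεG : ε ≤ μ.real G :=
    le_measureReal_le_of_le_integral (measurable_weightedDepth hB) (integrable_weightedDepth μ hB)
      (weightedDepth_nonneg hw) (fun x => hW ▸ weightedDepth_le_sum hw x) hε' hmean
  change _ ≤ (Measure.pi fun _ : Fin t => μ).real {p | ∃ i, p i ∈ G}
  rw [measureReal_pi_exists_mem hG, Fintype.card_fin]
  have hmiss : (1 - μ.real G) ^ t ≤ exp (-t * ε ^ 2 / 8) :=
    calc (1 - μ.real G) ^ t ≤ exp (-(t * μ.real G)) :=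
          one_sub_pow_le_exp_neg_mul measureReal_le_one t
      _ ≤ exp (-t * ε ^ 2 / 8) := by
        have hε2 : ε ^ 2 / 8 ≤ μ.real G := by nlinarith
        have := mul_le_mul_of_nonneg_left hε2 t.cast_nonneg
        exact exp_le_exp.2 (by linarith)
  have hk' : (1 : ℝ) ≤ k := by exact_mod_cast hk
  nlinarith [exp_pos (-t * ε ^ 2 / 8)]

/-- the randomized game. Drawing `t` i.i.d. samples from a probability
measure `μ`, where each of the `k` weighted sets `B j` has `μ(B j) ≥ 1/2 − ε`, with
probability at least `1 − k·exp(−t·ε²/8)` some sample point has weighted depth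
`wd(p_i) = Σ_{j : p_i ∈ B j} w j` at least `(1/2 − 2ε)·W`. -/
theorem random_sample_deep_point {Ω : Type*} [MeasurableSpace Ω]
    (μ : Measure Ω) [IsProbabilityMeasure μ]
    (ε : ℝ) (hε : 0 < ε) (hε' : ε ≤ 1/4)
    (k : ℕ) (hk : 1 ≤ k) (B : Fin k → Set Ω) (hB : ∀ j, MeasurableSet (B j))
    (hμB : ∀ j, 1/2 - ε ≤ (μ (B j)).toReal)
    (w : Fin k → ℝ) (hw : ∀ j, 0 ≤ w j) (W : ℝ) (hW : W = ∑ j, w j)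
    (t : ℕ) (ht : 1 ≤ t) :
    1 - (k : ℝ) * Real.exp (-(t : ℝ) * ε ^ 2 / 8) ≤
      ((Measure.pi fun _ : Fin t => μ)
        {p : Fin t → Ω | ∃ i : Fin t,
          (1/2 - 2*ε) * W ≤ ∑ j, (B j).indicator (fun _ => w j) (p i)}).toReal :=
  random_sample_deep_point_general μ ε hε hε' k hk B hB hμB w hw W hW t
end

section
/- For every 0 < ε < 1/2, let B ⊆ ℝ² be the closed Euclidean disk of radius 1 centered at (0, 1+ε²), and let S ⊆ ℝ² be the circle (sphere) of radius ε centered at the origin. Then the 1-dimensional Hausdorff measure of B ∩ S is at least (1/2 − 2ε)·2πε. -/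
/-!
Parametrize the circle of radius `ε` by `θ ↦ ε e^{iθ}` in `ℂ ≅ ℝ²`. For
`θ ∈ [2πε, π - 2πε]`, Jordan's inequality gives `sin θ ≥ 4ε ≥ 2ε`, and this is enough to put
`ε e^{iθ}` in the disk; the arc has angle `π - 4πε`, i.e. length exactly `(1/2 - 2ε)·2πε`.
Its `μH[1]` is at least its length: projecting a connected set by the 1-Lipschitz map
`dist · q` shows that it has measure at least the distance between any two of its points, so
`μH[1]` of a simple arc dominates the length of every inscribed polygon, and these lengths
tend to the arc length.
-/

open MeasureTheory Metric Real Set Filter Topology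

theorem IsPreconnected.edist_le_hausdorffMeasure_one {X : Type*} [MetricSpace X]
    [MeasurableSpace X] [BorelSpace X] {s : Set X} (hs : IsPreconnected s) {p q : X}
    (hp : p ∈ s) (hq : q ∈ s) : edist p q ≤ μH[1] s := by
  have hlip : LipschitzWith 1 (dist · q) := LipschitzWith.dist_left q
  have hIcc : Icc 0 (dist p q) ⊆ (dist · q) '' s :=
    (hs.image _ hlip.continuous.continuousOn).Icc_subset ⟨q, hq, dist_self q⟩ ⟨p, hp, rfl⟩
  calc edist p q = μH[1] (Icc 0 (dist p q)) := by
        rw [hausdorffMeasure_real, Real.volume_Icc, sub_zero, edist_dist]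
    _ ≤ μH[1] ((dist · q) '' s) := measure_mono hIcc
    _ ≤ μH[1] s := by simpa using hlip.hausdorffMeasure_image_le zero_le_one s

theorem sum_edist_le_hausdorffMeasure_image_Icc {X : Type*} [MetricSpace X]
    [MeasurableSpace X] [BorelSpace X] {f : ℝ → X} {t : ℕ → ℝ} (ht : Monotone t) (n : ℕ)
    (hf : ContinuousOn f (Icc (t 0) (t n))) (hinj : InjOn f (Icc (t 0) (t n))) :
    ∑ i ∈ Finset.range n, edist (f (t i)) (f (t (i + 1))) ≤ μH[1] (f '' Icc (t 0) (t n)) := by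
  have := Measure.nullSingletonClass_hausdorff X one_pos
  induction n with
  | zero => simp
  | succ n ih =>
    have hsplit : Icc (t 0) (t n) ∪ Icc (t n) (t (n + 1)) = Icc (t 0) (t (n + 1)) :=
      Icc_union_Icc_eq_Icc (ht n.zero_le) (ht n.le_succ)
    rw [← hsplit] at hf hinj
    have hlast : IsCompact (f '' Icc (t n) (t (n + 1))) :=
      isCompact_Icc.image_of_continuousOn (hf.mono subset_union_right)
    have hoverlap : f '' Icc (t 0) (t n) ∩ f '' Icc (t n) (t (n + 1)) = {f (t n)} := by
      rw [← hinj.image_inter subset_union_left subset_union_right,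
        Icc_inter_Icc_eq_singleton (ht n.zero_le) (ht n.le_succ), image_singleton]
    have hchord : edist (f (t n)) (f (t (n + 1))) ≤ μH[1] (f '' Icc (t n) (t (n + 1))) :=
      (isPreconnected_Icc.image f (hf.mono subset_union_right)).edist_le_hausdorffMeasure_one
        (mem_image_of_mem f (left_mem_Icc.2 (ht n.le_succ)))
        (mem_image_of_mem f (right_mem_Icc.2 (ht n.le_succ)))
    calc ∑ i ∈ Finset.range (n + 1), edist (f (t i)) (f (t (i + 1)))
        ≤ μH[1] (f '' Icc (t 0) (t n)) + μH[1] (f '' Icc (t n) (t (n + 1))) := by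
          rw [Finset.sum_range_succ]
          exact add_le_add (ih (hf.mono subset_union_left) (hinj.mono subset_union_left)) hchord
      _ = μH[1] (f '' (Icc (t 0) (t n) ∪ Icc (t n) (t (n + 1)))) := by
          rw [image_union,
            ← measure_union_add_inter₀ _ hlast.isClosed.measurableSet.nullMeasurableSet,
            hoverlap, measure_singleton, add_zero]
      _ = μH[1] (f '' Icc (t 0) (t (n + 1))) := by rw [hsplit]

theorem dist_circleMap_circleMap (c : ℂ) (r x y : ℝ) :
    dist (circleMap c r x) (circleMap c r y) = 2 * |r| * |sin ((x - y) / 2)| := by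
  have hdiff : circleMap c r x - circleMap c r y
      = circleMap 0 r y * (Complex.exp (Complex.I * (x - y : ℝ)) - 1) := by
    simp only [circleMap, zero_add, mul_sub, mul_one, mul_assoc, ← Complex.exp_add]
    push_cast
    ring_nf
  rw [dist_eq_norm, hdiff, norm_mul, norm_circleMap_zero, Complex.norm_exp_I_mul_ofReal_sub_one,
    norm_mul, Real.norm_eq_abs, Real.norm_eq_abs, abs_two]
  ring

theorem sin_le_sin_of_le_of_le_pi_sub {a θ : ℝ} (ha : 0 ≤ a) (h₁ : a ≤ θ) (h₂ : θ ≤ π - a) :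
    sin a ≤ sin θ := by
  rcases le_total θ (π / 2) with hθ | hθ
  · exact sin_le_sin_of_le_of_le_pi_div_two (by linarith) hθ h₁
  · rw [← sin_pi_sub θ]
    exact sin_le_sin_of_le_of_le_pi_div_two (by linarith) (by linarith) (by linarith)

theorem circleMap_zero_mem_closedBall_of_two_mul_le_sin {ε θ : ℝ} (hε : 0 ≤ ε)
    (hθ : 2 * ε ≤ sin θ) : circleMap 0 ε θ ∈ closedBall ((1 + ε ^ 2 : ℝ) * Complex.I) 1 := by
  rw [mem_closedBall, dist_eq_norm, ← pow_le_one_iff_of_nonneg (norm_nonneg _) two_ne_zero,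
    Complex.sq_norm, Complex.normSq_apply]
  simp only [Complex.sub_re, Complex.sub_im, circleMap_zero_re, circleMap_zero_im,
    Complex.mul_re, Complex.mul_im, Complex.ofReal_re, Complex.ofReal_im, Complex.I_re,
    Complex.I_im]
  nlinarith [sin_sq_add_cos_sq θ,
    mul_le_mul_of_nonneg_left hθ (by positivity : 0 ≤ 2 * ε * (1 + ε ^ 2))]

theorem ofReal_mul_sub_le_hausdorffMeasure_image_circleMap (c : ℂ) {r a b : ℝ} (hr : 0 ≤ r)
    (hab : b - a < 2 * π) : ENNReal.ofReal (r * (b - a)) ≤ μH[1] (circleMap c r '' Icc a b) := by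
  rcases le_or_gt (r * (b - a)) 0 with hle | hpos
  · simp [ENNReal.ofReal_eq_zero.2 hle]
  have hr₀ : 0 < r := lt_of_le_of_ne hr (by rintro rfl; simp at hpos)
  have hL : 0 < b - a := pos_of_mul_pos_right hpos hr
  have hinj : InjOn (circleMap c r) (Icc a b) := fun x hx y hy hxy =>
    eq_of_circleMap_eq hr₀.ne' (abs_lt.2 ⟨by linarith [hx.1, hy.2], by linarith [hx.2, hy.1]⟩) hxy
  -- `r (b - a) |sinc ((b - a) / 2k)|` is the length of the inscribed polygon with `k` equal sides
  have hchords : ∀ k : ℕ, k ≠ 0 → ENNReal.ofReal (r * (b - a) * |sinc ((b - a) / (2 * k))|) ≤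
      μH[1] (circleMap c r '' Icc a b) := by
    intro k hk
    have hk₀ : (0 : ℝ) < k := Nat.cast_pos.2 (Nat.pos_of_ne_zero hk)
    set t : ℕ → ℝ := fun i => a + i * ((b - a) / k) with ht
    have ht_mono : Monotone t := fun i j hij => by
      simp only [ht]; gcongr
    have ht0 : t 0 = a := by simp [ht]
    have htk : t k = b := by simp only [ht]; field_simp; ring
    have hsum := sum_edist_le_hausdorffMeasure_image_Icc (f := circleMap c r) ht_mono k
    rw [ht0, htk] at hsum
    refine le_trans (le_of_eq ?_) (hsum (continuous_circleMap c r).continuousOn hinj)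
    have hx : (b - a) / (2 * k) ≠ 0 := by positivity
    have hstep : ∀ i : ℕ, (t i - t (i + 1)) / 2 = -((b - a) / (2 * k)) := fun i => by
      simp only [ht]; push_cast; field_simp; ring
    simp only [edist_dist, dist_circleMap_circleMap, hstep, sin_neg, abs_neg, abs_of_pos hr₀,
      Finset.sum_const, Finset.card_range, nsmul_eq_mul]
    rw [← ENNReal.ofReal_natCast, ← ENNReal.ofReal_mul (Nat.cast_nonneg k), sinc_of_ne_zero hx,
      abs_div, abs_of_pos (by positivity : 0 < (b - a) / (2 * k))]
    congr 1
    field_simp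
  have hlim : Tendsto (fun k : ℕ => ENNReal.ofReal (r * (b - a) * |sinc ((b - a) / (2 * k))|))
      atTop (𝓝 (ENNReal.ofReal (r * (b - a)))) := by
    have h0 : Tendsto (fun k : ℕ => (b - a) / (2 * k)) atTop (𝓝 0) := by
      simpa only [div_div] using tendsto_const_div_atTop_nhds_zero_nat ((b - a) / 2)
    have hsinc : Tendsto (fun x => |sinc x|) (𝓝 0) (𝓝 1) := by
      simpa only [sinc_zero, abs_one] using continuous_sinc.abs.tendsto 0
    have := ENNReal.tendsto_ofReal ((tendsto_const_nhds (x := r * (b - a))).mul (hsinc.comp h0))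
    rwa [mul_one] at this
  exact le_of_tendsto hlim (eventually_atTop.2 ⟨1, fun k hk => hchords k (by omega)⟩)

theorem cap_length_lower_bound_general (ε : ℝ) (hε : 0 < ε) :
    ENNReal.ofReal ((1/2 - 2*ε) * (2 * Real.pi * ε)) ≤
      μH[1] (closedBall ((WithLp.equiv 2 (Fin 2 → ℝ)).symm ![0, 1 + ε^2]) 1 ∩
              sphere (0 : EuclideanSpace ℝ (Fin 2)) ε) := by
  set e := Complex.orthonormalBasisOneI.repr
  have hcenter : e.symm ((WithLp.equiv 2 (Fin 2 → ℝ)).symm ![0, 1 + ε^2]) =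
      ((1 + ε ^ 2 : ℝ) : ℂ) * Complex.I := by
    rw [Complex.orthonormalBasisOneI_repr_symm_apply]
    simp
  have harc : circleMap 0 ε '' Icc (2 * π * ε) (π - 2 * π * ε) ⊆
      e ⁻¹' (closedBall ((WithLp.equiv 2 (Fin 2 → ℝ)).symm ![0, 1 + ε^2]) 1 ∩
        sphere (0 : EuclideanSpace ℝ (Fin 2)) ε) := by
    rintro _ ⟨θ, hθ, rfl⟩
    rw [preimage_inter, e.preimage_closedBall, e.preimage_sphere, map_zero, hcenter]
    have hsin : 2 * ε ≤ sin θ := calc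
      2 * ε ≤ 2 / π * (2 * π * ε) := by field_simp; linarith
      _ ≤ sin (2 * π * ε) := mul_le_sin (by positivity) (by linarith [hθ.1, hθ.2])
      _ ≤ sin θ := sin_le_sin_of_le_of_le_pi_sub (by positivity) hθ.1 hθ.2
    exact ⟨circleMap_zero_mem_closedBall_of_two_mul_le_sin hε.le hsin,
      circleMap_mem_sphere 0 hε.le θ⟩
  calc ENNReal.ofReal ((1/2 - 2*ε) * (2 * Real.pi * ε))
      = ENNReal.ofReal (ε * ((π - 2 * π * ε) - 2 * π * ε)) := by congr 1; ring
    _ ≤ μH[1] (circleMap 0 ε '' Icc (2 * π * ε) (π - 2 * π * ε)) :=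
        ofReal_mul_sub_le_hausdorffMeasure_image_circleMap 0 hε.le (by nlinarith [pi_pos])
    _ = μH[1] (e '' (circleMap 0 ε '' Icc (2 * π * ε) (π - 2 * π * ε))) :=
        (e.isometry.hausdorffMeasure_image (Or.inl zero_le_one) _).symm
    _ ≤ _ := measure_mono (image_subset_iff.2 harc)

/-- in the plane, the unit disk centered at `(0, 1+ε²)` covers arc length at
least `(1/2 − 2ε)·2πε` of the circle of radius `ε` centered at the origin (lengths
measured by the 1-dimensional Hausdorff measure). -/
theorem cap_length_lower_bound (ε : ℝ) (hε : 0 < ε) (hε' : ε < 1/2) :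
    ENNReal.ofReal ((1/2 - 2*ε) * (2 * Real.pi * ε)) ≤
      μH[1] (closedBall ((WithLp.equiv 2 (Fin 2 → ℝ)).symm ![0, 1 + ε^2]) 1 ∩
              sphere (0 : EuclideanSpace ℝ (Fin 2)) ε) :=
  cap_length_lower_bound_general ε hε
end

section
/- For every integer d ≥ 2 there exists a constant c_d > 0 (depending only on d) such that for all 0 < ε < 1/2 the following holds: if B ⊆ ℝ^d is the closed Euclidean unit ball centered at (0,…,0,1+ε²) and S ⊆ ℝ^d is the sphere of radius ε centered at the origin, then μ^{d−1}(B ∩ S) ≥ (1/2 − c_d·ε)·μ^{d−1}(S), where μ^{d−1} denotes the (d−1)-dimensional Hausdorff measure on ℝ^d. -/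
/-!
The cap of `S` cut out by the half-space `x_d ≥ 2ε²` lies in `B`. Projecting radially from the
point `p = 2ε² e_d` back onto `S` maps this cap onto the upper hemisphere, and on the cap this
projection is `(1 - 2ε)⁻¹`-Lipschitz because its points stay at distance at least `ε - 2ε²` from
`p` (in an inner product space, `‖x/‖x‖ - y/‖y‖‖ ≤ ‖x - y‖ / m` when `‖x‖, ‖y‖ ≥ m`). Hence the
cap carries at least `(1 - 2ε)^(d-1)` times the measure of a hemisphere, which is half the
sphere, and Bernoulli's inequality gives the bound with `c_d = d - 1`.
-/

open MeasureTheory Metric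
open scoped RealInnerProductSpace

section Normalize

variable {E : Type*} [NormedAddCommGroup E] [InnerProductSpace ℝ E]

theorem norm_sub_sq_eq_normalize_sub_sq (x y : E) :
    ‖x - y‖ ^ 2 =
      (‖x‖ - ‖y‖) ^ 2 + ‖x‖ * ‖y‖ * ‖NormedSpace.normalize x - NormedSpace.normalize y‖ ^ 2 := by
  rcases eq_or_ne x 0 with rfl | hx
  · simp
  rcases eq_or_ne y 0 with rfl | hy
  · simp
  rw [norm_sub_sq_real (NormedSpace.normalize x), NormedSpace.norm_normalize hx,
    NormedSpace.norm_normalize hy, NormedSpace.normalize, NormedSpace.normalize,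
    real_inner_smul_left, real_inner_smul_right, norm_sub_sq_real]
  field_simp
  ring

theorem norm_normalize_sub_normalize_le {x y : E} {m : ℝ} (hm : 0 < m) (hx : m ≤ ‖x‖)
    (hy : m ≤ ‖y‖) :
    ‖NormedSpace.normalize x - NormedSpace.normalize y‖ ≤ ‖x - y‖ / m := by
  rw [le_div_iff₀ hm]
  have hxy : m ^ 2 ≤ ‖x‖ * ‖y‖ := by nlinarith
  refine le_of_pow_le_pow_left₀ two_ne_zero (norm_nonneg _) ?_
  rw [norm_sub_sq_eq_normalize_sub_sq x y, mul_pow]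
  nlinarith [sq_nonneg (‖x‖ - ‖y‖), sq_nonneg ‖NormedSpace.normalize x - NormedSpace.normalize y‖]

end Normalize

theorem exists_pos_norm_add_smul_eq {E : Type*} [NormedAddCommGroup E] [NormedSpace ℝ E]
    {p y : E} {R : ℝ} (hp : ‖p‖ < R) (hy : y ≠ 0) : ∃ s : ℝ, 0 < s ∧ ‖p + s • y‖ = R := by
  have hy' : 0 < ‖y‖ := norm_pos_iff.2 hy
  set T := (R + ‖p‖) / ‖y‖
  have hT : 0 ≤ T := div_nonneg (by linarith [norm_nonneg p]) hy'.le
  have hRT : R ≤ ‖p + T • y‖ := by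
    have := norm_sub_norm_le (T • y) (-p)
    rw [norm_smul, Real.norm_of_nonneg hT, div_mul_cancel₀ _ hy'.ne', norm_neg,
      sub_neg_eq_add, add_comm (T • y)] at this
    linarith
  have hcont : ContinuousOn (fun s : ℝ => ‖p + s • y‖) (Set.Icc 0 T) := by fun_prop
  obtain ⟨s, ⟨hs0, -⟩, hs⟩ :=
    intermediate_value_Icc hT hcont ⟨by simpa using hp.le, hRT⟩
  refine ⟨s, hs0.lt_of_ne ?_, hs⟩
  rintro rfl
  simp only [zero_smul, add_zero] at hs
  exact hp.ne hs

section SphereCap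

variable {E : Type*} [NormedAddCommGroup E] [InnerProductSpace ℝ E]

def sphereCap (ε a : ℝ) (u : E) : Set E := sphere 0 ε ∩ {x | a ≤ ⟪x, u⟫}

theorem sphereCap_subset_closedBall {ε : ℝ} {u : E} (hu : ‖u‖ = 1) :
    sphereCap ε (2 * ε ^ 2) u ⊆ closedBall ((1 + ε ^ 2) • u) 1 := by
  rintro x ⟨hx, hxu⟩
  rw [mem_sphere_zero_iff_norm] at hx
  rw [mem_closedBall, dist_eq_norm, ← sq_le_one_iff₀ (norm_nonneg _), norm_sub_sq_real,
    real_inner_smul_right, norm_smul, hu, hx, Real.norm_of_nonneg (by positivity)]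
  nlinarith [sq_nonneg ε, mul_le_mul_of_nonneg_left hxu (by positivity : (0:ℝ) ≤ 1 + ε ^ 2)]

theorem sphereCap_zero_subset_image {ε a : ℝ} {u : E} (hu : ‖u‖ = 1) (ha : 0 ≤ a)
    (haε : a < ε) :
    sphereCap ε 0 u ⊆ (fun x => ε • NormedSpace.normalize (x - a • u)) '' sphereCap ε a u := by
  rintro y ⟨hy, hyu⟩
  rw [mem_sphere_zero_iff_norm] at hy
  have hy0 : y ≠ 0 := norm_pos_iff.1 (by linarith)
  obtain ⟨s, hs, hxs⟩ := exists_pos_norm_add_smul_eq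
    (by rwa [norm_smul, hu, mul_one, Real.norm_of_nonneg ha] : ‖a • u‖ < ε) hy0
  refine ⟨a • u + s • y, ⟨mem_sphere_zero_iff_norm.2 hxs, ?_⟩, ?_⟩
  · rw [Set.mem_ofPred_eq, inner_add_left, real_inner_smul_left, real_inner_smul_left,
      real_inner_self_eq_norm_sq, hu]
    nlinarith [mul_nonneg hs.le hyu]
  · show ε • NormedSpace.normalize (a • u + s • y - a • u) = y
    rw [add_sub_cancel_left, NormedSpace.normalize_smul_of_pos hs, NormedSpace.normalize, hy,
      smul_smul, mul_inv_cancel₀ (ha.trans_lt haε).ne', one_smul]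

theorem lipschitzOnWith_sphereCap {ε a : ℝ} {u : E} (hu : ‖u‖ = 1) (ha : 0 ≤ a)
    (haε : a < ε) :
    LipschitzOnWith (ε / (ε - a)).toNNReal
      (fun x => ε • NormedSpace.normalize (x - a • u)) (sphereCap ε a u) := by
  have hm : 0 < ε - a := sub_pos.2 haε
  have hfar : ∀ x ∈ sphereCap ε a u, ε - a ≤ ‖x - a • u‖ := by
    rintro x ⟨hx, -⟩
    have := norm_sub_norm_le x (a • u)
    rwa [mem_sphere_zero_iff_norm.1 hx, norm_smul, hu, mul_one, Real.norm_of_nonneg ha] at this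
  refine LipschitzOnWith.of_dist_le_mul fun x hx y hy => ?_
  rw [Real.coe_toNNReal _ (div_nonneg (ha.trans haε.le) hm.le), dist_eq_norm, dist_eq_norm,
    ← smul_sub, norm_smul, Real.norm_of_nonneg (ha.trans haε.le), div_mul_eq_mul_div, mul_div_assoc]
  refine mul_le_mul_of_nonneg_left ?_ (ha.trans haε.le)
  rw [← sub_sub_sub_cancel_right x y (a • u)]
  exact norm_normalize_sub_normalize_le hm (hfar x hx) (hfar y hy)

variable [MeasurableSpace E] [BorelSpace E]

theorem hausdorffMeasure_sphere_le_two_mul_sphereCap_zero (ε r : ℝ) (u : E) :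
    μH[r] (sphere (0 : E) ε) ≤ 2 * μH[r] (sphereCap ε 0 u) := by
  have hcover : sphere (0 : E) ε ⊆ sphereCap ε 0 u ∪ (fun x => -x) '' sphereCap ε 0 u := by
    intro x hx
    rcases le_total 0 ⟪x, u⟫ with h | h
    · exact Or.inl ⟨hx, h⟩
    · exact Or.inr ⟨-x, ⟨by simpa using hx, by simpa [inner_neg_left] using h⟩, neg_neg x⟩
  calc μH[r] (sphere (0 : E) ε)
      ≤ μH[r] (sphereCap ε 0 u) + μH[r] ((fun x => -x) '' sphereCap ε 0 u) :=
        (measure_mono hcover).trans (measure_union_le _ _)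
    _ = 2 * μH[r] (sphereCap ε 0 u) := by
        rw [isometry_neg.hausdorffMeasure_image (Or.inr neg_surjective), two_mul]

theorem hausdorffMeasure_sphereCap_zero_le {ε a r : ℝ} {u : E} (hu : ‖u‖ = 1) (ha : 0 ≤ a)
    (haε : a < ε) (hr : 0 ≤ r) :
    μH[r] (sphereCap ε 0 u) ≤ ENNReal.ofReal (ε / (ε - a)) ^ r * μH[r] (sphereCap ε a u) :=
  (measure_mono (sphereCap_zero_subset_image hu ha haε)).trans
    ((lipschitzOnWith_sphereCap hu ha haε).hausdorffMeasure_image_le hr)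

end SphereCap

theorem ofReal_half_sub_mul_mul_two_mul_inv_pow_le_one (n : ℕ) {ε : ℝ} (hε : ε < 1 / 2) :
    ENNReal.ofReal (1 / 2 - n * ε) * (2 * ENNReal.ofReal (1 - 2 * ε)⁻¹ ^ (n : ℝ)) ≤ 1 := by
  have hb : 0 < 1 - 2 * ε := by linarith
  have bernoulli : 1 - 2 * n * ε ≤ (1 - 2 * ε) ^ n := by
    calc 1 - 2 * n * ε = 1 + n * -(2 * ε) := by ring
      _ ≤ (1 + -(2 * ε)) ^ n := one_add_mul_le_pow (by linarith) n
      _ = (1 - 2 * ε) ^ n := by ring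
  rw [ENNReal.rpow_natCast, ← ENNReal.ofReal_pow (inv_nonneg.2 hb.le), ← ENNReal.ofReal_ofNat 2,
    ← ENNReal.ofReal_mul zero_le_two, ← ENNReal.ofReal_mul' (by positivity),
    ENNReal.ofReal_le_one, inv_pow]
  calc (1 / 2 - n * ε) * (2 * ((1 - 2 * ε) ^ n)⁻¹) = (1 - 2 * n * ε) * ((1 - 2 * ε) ^ n)⁻¹ := by
        ring
    _ ≤ (1 - 2 * ε) ^ n * ((1 - 2 * ε) ^ n)⁻¹ := by gcongr
    _ = 1 := mul_inv_cancel₀ (pow_pos hb n).ne'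

/-- in `ℝ^d` (`d ≥ 2`) there is a constant `c_d > 0` such that for all
`0 < ε < 1/2`, the unit ball centered at `(0,…,0,1+ε²)` covers at least a
`(1/2 − c_d·ε)` fraction of the `(d−1)`-dimensional Hausdorff measure of the sphere of
radius `ε` centered at the origin. -/
theorem cap_area_lower_bound (d : ℕ) (hd : 2 ≤ d) :
    ∃ c : ℝ, 0 < c ∧ ∀ ε : ℝ, 0 < ε → ε < 1/2 →
      ENNReal.ofReal (1/2 - c * ε) *
          μH[(d : ℝ) - 1] (sphere (0 : EuclideanSpace ℝ (Fin d)) ε) ≤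
        μH[(d : ℝ) - 1]
          (closedBall ((WithLp.equiv 2 (Fin d → ℝ)).symm
              (fun i => if (i : ℕ) = d - 1 then 1 + ε^2 else 0)) 1 ∩
            sphere (0 : EuclideanSpace ℝ (Fin d)) ε) := by
  obtain ⟨n, rfl⟩ := Nat.exists_eq_add_of_le' (by omega : 1 ≤ d)
  refine ⟨n, by exact_mod_cast (by omega : 0 < n), fun ε hε hε2 => ?_⟩
  set u : EuclideanSpace ℝ (Fin (n + 1)) := EuclideanSpace.single (Fin.last n) 1
  have hu : ‖u‖ = 1 := by simp [u]
  have hcenter : (WithLp.equiv 2 (Fin (n + 1) → ℝ)).symm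
      (fun i => if (i : ℕ) = n + 1 - 1 then 1 + ε ^ 2 else 0) = (1 + ε ^ 2) • u := by
    ext i
    simp [u, Fin.ext_iff]
  have hK : ε / (ε - 2 * ε ^ 2) = (1 - 2 * ε)⁻¹ := by field_simp
  have hcap : μH[n] (sphere (0 : EuclideanSpace ℝ (Fin (n + 1))) ε) ≤
      2 * (ENNReal.ofReal (1 - 2 * ε)⁻¹ ^ (n : ℝ) * μH[n] (sphereCap ε (2 * ε ^ 2) u)) := by
    rw [← hK]
    refine (hausdorffMeasure_sphere_le_two_mul_sphereCap_zero ε n u).trans ?_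
    gcongr
    exact hausdorffMeasure_sphereCap_zero_le hu (by positivity) (by nlinarith) n.cast_nonneg
  have hr : ((n + 1 : ℕ) : ℝ) - 1 = n := by push_cast; ring
  rw [hr, hcenter]
  calc _
      ≤ ENNReal.ofReal (1 / 2 - n * ε) *
          (2 * (ENNReal.ofReal (1 - 2 * ε)⁻¹ ^ (n : ℝ) * μH[n] (sphereCap ε (2 * ε ^ 2) u))) := by
        gcongr
    _ = ENNReal.ofReal (1 / 2 - n * ε) * (2 * ENNReal.ofReal (1 - 2 * ε)⁻¹ ^ (n : ℝ)) *
          μH[n] (sphereCap ε (2 * ε ^ 2) u) := by ring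
    _ ≤ μH[n] (sphereCap ε (2 * ε ^ 2) u) :=
        mul_le_of_le_one_left' (ofReal_half_sub_mul_mul_two_mul_inv_pow_le_one n hε2)
    _ ≤ μH[n] (closedBall ((1 + ε ^ 2) • u) 1 ∩ sphere 0 ε) :=
        measure_mono fun x hx => ⟨sphereCap_subset_closedBall hu hx, hx.1⟩
end

section
/- Let C = [0,1]² ⊆ ℝ² be the axis-aligned unit square with corners (0,0), (0,1), (1,0), (1,1) and center o = (1/2, 1/2). Let q ∈ ℝ² and suppose the closed Euclidean disk D of radius 1 centered at q contains none of the four corners of C, i.e., ‖q − v‖ > 1 for each corner v. Then D contains no point within distance 1/4 of the center of C: for every p ∈ ℝ² with ‖p − o‖ ≤ 1/4, one has ‖q − p‖ > 1. -/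
/-!
Write `u = q - o`. The corner `v` lying in the same quadrant around `o` as `q` satisfies
`‖q - v‖² = ‖u‖² - (|u₀| + |u₁|) + 1/2 ≤ ‖u‖² - ‖u‖ + 1/2`, so if it lies outside the disk then
`‖u‖² - ‖u‖ > 1/2`, which forces `‖u‖ > 5/4`. The triangle inequality then keeps every point
of the disk of radius `1/4` around `o` at distance more than `1` from `q`.
-/

def unitSquareCorners : Set (EuclideanSpace ℝ (Fin 2)) :=
  {(WithLp.equiv 2 (Fin 2 → ℝ)).symm ![0, 0], (WithLp.equiv 2 (Fin 2 → ℝ)).symm ![0, 1],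
    (WithLp.equiv 2 (Fin 2 → ℝ)).symm ![1, 0], (WithLp.equiv 2 (Fin 2 → ℝ)).symm ![1, 1]}

namespace EuclideanSpace

lemma norm_sq_fin_two (x : EuclideanSpace ℝ (Fin 2)) : ‖x‖ ^ 2 = x 0 ^ 2 + x 1 ^ 2 := by
  simp [real_norm_sq_eq, Fin.sum_univ_two]

lemma norm_fin_two_le_abs_add_abs (x : EuclideanSpace ℝ (Fin 2)) : ‖x‖ ≤ |x 0| + |x 1| := by
  refine le_of_sq_le_sq ?_ (by positivity)
  rw [norm_sq_fin_two, add_sq, sq_abs, sq_abs]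
  linarith [mul_nonneg (abs_nonneg (x 0)) (abs_nonneg (x 1))]

end EuclideanSpace

open EuclideanSpace

lemma exists_mem_zero_one_sq_sub_eq (x : ℝ) :
    ∃ c ∈ ({0, 1} : Set ℝ), (x - c) ^ 2 = (|x - 1/2| - 1/2) ^ 2 := by
  rcases le_total (1/2) x with hx | hx
  · exact ⟨1, by simp, by rw [abs_of_nonneg (by linarith)]; ring⟩
  · exact ⟨0, by simp, by rw [abs_of_nonpos (by linarith)]; ring⟩

lemma exists_mem_unitSquareCorners_norm_sub_sq_eq (q : EuclideanSpace ℝ (Fin 2)) :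
    ∃ v ∈ unitSquareCorners,
      ‖q - v‖ ^ 2 = (|q 0 - 1/2| - 1/2) ^ 2 + (|q 1 - 1/2| - 1/2) ^ 2 := by
  obtain ⟨c₀, hc₀, h₀⟩ := exists_mem_zero_one_sq_sub_eq (q 0)
  obtain ⟨c₁, hc₁, h₁⟩ := exists_mem_zero_one_sq_sub_eq (q 1)
  refine ⟨!₂[c₀, c₁], ?_, by simp [norm_sq_fin_two, h₀, h₁]⟩
  rcases hc₀ with rfl | rfl <;> rcases hc₁ with rfl | rfl <;> simp [unitSquareCorners]

lemma exists_mem_unitSquareCorners_norm_sub_sq_le (q : EuclideanSpace ℝ (Fin 2)) :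
    ∃ v ∈ unitSquareCorners,
      ‖q - v‖ ^ 2 ≤ ‖q - !₂[1/2, 1/2]‖ ^ 2 - ‖q - !₂[1/2, 1/2]‖ + 1/2 := by
  obtain ⟨v, hv, hqv⟩ := exists_mem_unitSquareCorners_norm_sub_sq_eq q
  refine ⟨v, hv, ?_⟩
  have hsq := norm_sq_fin_two (q - !₂[1/2, 1/2])
  have hl1 := norm_fin_two_le_abs_add_abs (q - !₂[1/2, 1/2])
  simp only [PiLp.sub_apply, Matrix.cons_val_zero, Matrix.cons_val_one] at hsq hl1
  linarith [sq_abs (q 0 - 1/2), sq_abs (q 1 - 1/2)]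

/-- if a closed unit disk (center `q`) contains none of the four corners of
the unit square `[0,1]²`, then it contains no point within distance `1/4` of the
square's center `(1/2, 1/2)`. -/
theorem disk_missing_corners (q : EuclideanSpace ℝ (Fin 2))
    (h : ∀ v ∈ ({(WithLp.equiv 2 (Fin 2 → ℝ)).symm ![0, 0],
                 (WithLp.equiv 2 (Fin 2 → ℝ)).symm ![0, 1],
                 (WithLp.equiv 2 (Fin 2 → ℝ)).symm ![1, 0],
                 (WithLp.equiv 2 (Fin 2 → ℝ)).symm ![1, 1]} :
        Set (EuclideanSpace ℝ (Fin 2))), 1 < ‖q - v‖)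
    (p : EuclideanSpace ℝ (Fin 2))
    (hp : ‖p - (WithLp.equiv 2 (Fin 2 → ℝ)).symm ![1/2, 1/2]‖ ≤ 1/4) :
    1 < ‖q - p‖ := by
  set o : EuclideanSpace ℝ (Fin 2) := !₂[1/2, 1/2]
  have hpo : ‖p - o‖ ≤ 1/4 := hp
  obtain ⟨v, hv, hqv⟩ := exists_mem_unitSquareCorners_norm_sub_sq_le q
  have hfar : 1 < ‖q - o‖ ^ 2 - ‖q - o‖ + 1/2 := by nlinarith [h v hv]
  have hqo : 5/4 < ‖q - o‖ := by nlinarith [norm_nonneg (q - o)]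
  calc 1 < ‖q - o‖ - ‖p - o‖ := by linarith
    _ ≤ ‖q - p‖ := by simpa using norm_sub_norm_le (q - o) (p - o)
end
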